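/- arXiv:2410.06073 — 2 statements merged into one kernel-verified Lean document; each statement's English description precedes it below -/
import Mathlib

section
/- Let X be a metric space, Γ ⊂ X nonempty and closed, g : Γ → ℝ≥0 Lipschitz with constant L_g, and C > 0 with L_g·C < 1. For t₀ ≥ 0 and γ ∈ C(ℝ≥0,X), define τ(t₀,γ) = inf{t ≥ 0 : γ(t+t₀) ∈ Γ} (with inf ∅ = +∞) and J(t₀,γ) = τ(t₀,γ) + g(γ(t₀+τ(t₀,γ))) if τ(t₀,γ) < ∞ and +∞ otherwise. Then J is lower semicontinuous on ℝ≥0 × Lip_C(ℝ≥0,X), where Lip_C denotes curves that are C-Lipschitz and the topology is that of uniform convergence on compact sets. -/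
/-!
For a `C`-Lipschitz curve and `Lg * C ≤ 1`, leaving `Γ` at any later hitting time `t` can only
cost more than leaving at the first one, so `J(t₀, γ) ≤ b` iff some hitting time `t` satisfies
`t + g(γ(t₀ + t)) ≤ b`. Hence the sublevel set `{J ≤ b}` is the projection of a closed set of
triples `(t₀, γ, t)` with `t ∈ [0, b]`, and projecting along a compact factor preserves
closedness.
-/

open MeasureTheory Filter Topology Set

/-- First exit time after `t₀` of the curve `γ`, valued in `[0,+∞]`. -/
noncomputable def exitTime {X : Type*} [MetricSpace X] (Γ : Set X)
    (γ : C(NNReal, X)) (t₀ : NNReal) : ENNReal :=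
  sInf {u : ENNReal | ∃ t : NNReal, u = (t : ENNReal) ∧ γ (t + t₀) ∈ Γ}

/-- The exit cost functional `J(t₀, γ) = τ(t₀,γ) + g(γ(t₀ + τ(t₀,γ)))`, equal to `+∞` when
`γ` never reaches `Γ` after `t₀`. -/
noncomputable def exitCost {X : Type*} [MetricSpace X] (Γ : Set X) (g : X → ℝ)
    (t₀ : NNReal) (γ : C(NNReal, X)) : ENNReal :=
  if h : exitTime Γ γ t₀ ≠ ⊤ then
    exitTime Γ γ t₀ + ENNReal.ofReal (g (γ (t₀ + (exitTime Γ γ t₀).toNNReal)))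
  else ⊤

theorem IsClosed.image_fst_of_forall_snd_mem {α β : Type*} [TopologicalSpace α]
    [TopologicalSpace β] {K : Set (α × β)} {L : Set β} (hK : IsClosed K) (hL : IsCompact L)
    (hKL : ∀ p ∈ K, p.2 ∈ L) : IsClosed (Prod.fst '' K) := by
  have : CompactSpace L := isCompact_iff_compactSpace.1 hL
  have hK' : IsClosed ((Prod.map id Subtype.val : α × L → α × β) ⁻¹' K) :=
    hK.preimage (continuous_id.prodMap continuous_subtype_val)
  convert isClosedMap_fst_of_compactSpace _ hK' using 1
  ext a
  constructor
  · rintro ⟨⟨a, b⟩, hp, rfl⟩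
    exact ⟨(a, ⟨b, hKL _ hp⟩), hp, rfl⟩
  · rintro ⟨⟨a, b⟩, hp, rfl⟩
    exact ⟨_, hp, rfl⟩

section ExitTime

variable {X : Type*} [MetricSpace X] {Γ : Set X} {g : X → ℝ} {γ : C(NNReal, X)} {t₀ t : NNReal}

lemma exitTime_eq_iInf :
    exitTime Γ γ t₀ = ⨅ t ∈ {t : NNReal | γ (t₀ + t) ∈ Γ}, (t : ENNReal) := by
  rw [exitTime, ← sInf_image]
  congr 1
  ext u
  simp [eq_comm, add_comm, and_comm]

lemma exitTime_le_of_mem (h : γ (t₀ + t) ∈ Γ) : exitTime Γ γ t₀ ≤ t :=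
  sInf_le ⟨t, rfl, by rwa [add_comm]⟩

lemma exitTime_mem (hΓ : IsClosed Γ) (h : exitTime Γ γ t₀ ≠ ⊤) :
    γ (t₀ + (exitTime Γ γ t₀).toNNReal) ∈ Γ := by
  set S := {t : NNReal | γ (t₀ + t) ∈ Γ}
  have hS : S.Nonempty := by
    rw [nonempty_iff_ne_empty]
    rintro hS
    simp [exitTime_eq_iInf, S, hS] at h
  have hSc : IsClosed S := hΓ.preimage (by fun_prop)
  rw [exitTime_eq_iInf, ← ENNReal.coe_sInf hS, ENNReal.toNNReal_coe]
  exact hSc.csInf_mem hS (OrderBot.bddBelow S)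

lemma exists_mem_of_exitCost_le {b : ENNReal} (hΓ : IsClosed Γ) (hb : b ≠ ⊤)
    (h : exitCost Γ g t₀ γ ≤ b) :
    ∃ t : NNReal, γ (t₀ + t) ∈ Γ ∧ (t : ENNReal) + ENNReal.ofReal (g (γ (t₀ + t))) ≤ b := by
  have hτ : exitTime Γ γ t₀ ≠ ⊤ := by
    rintro hτ
    rw [exitCost, dif_neg (not_not.2 hτ)] at h
    exact hb (top_le_iff.1 h)
  rw [exitCost, dif_pos hτ] at h
  refine ⟨_, exitTime_mem hΓ hτ, ?_⟩
  rwa [ENNReal.coe_toNNReal hτ]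

/-- Exiting later than the first exit time costs time at rate `1` and gains at most
`Lg * C ≤ 1` per unit of time in the exit cost `g`. -/
lemma exitCost_le_of_mem {Lg C : NNReal} (hΓ : IsClosed Γ) (hg : LipschitzOnWith Lg g Γ)
    (hLgC : (Lg : ℝ) * C ≤ 1) (hγ : LipschitzWith C γ) (ht : γ (t₀ + t) ∈ Γ) :
    exitCost Γ g t₀ γ ≤ t + ENNReal.ofReal (g (γ (t₀ + t))) := by
  have hτt := exitTime_le_of_mem ht
  have hτ : exitTime Γ γ t₀ ≠ ⊤ := ne_top_of_le_ne_top ENNReal.coe_ne_top hτt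
  rw [exitCost, dif_pos hτ]
  set τ := (exitTime Γ γ t₀).toNNReal
  rw [← ENNReal.coe_toNNReal hτ]
  have hτt' : τ ≤ t := by simpa using ENNReal.toNNReal_mono ENNReal.coe_ne_top hτt
  have hdist : dist (γ (t₀ + τ)) (γ (t₀ + t)) ≤ C * (t - τ : ℝ) := by
    have h := hγ.dist_le_mul (t₀ + τ) (t₀ + t)
    rwa [NNReal.dist_eq, NNReal.coe_add, NNReal.coe_add, add_sub_add_left_eq_sub, abs_sub_comm,
      abs_of_nonneg (sub_nonneg.2 (NNReal.coe_le_coe.2 hτt'))] at h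
  have hgτ : g (γ (t₀ + τ)) ≤ g (γ (t₀ + t)) + (t - τ : ℝ) := by
    have h := (le_abs_self _).trans
      ((Real.dist_eq _ _).symm.le.trans (hg.dist_le_mul _ (exitTime_mem hΓ hτ) _ ht))
    nlinarith [mul_le_mul_of_nonneg_left hdist Lg.coe_nonneg,
      mul_le_mul_of_nonneg_right hLgC (sub_nonneg.2 (NNReal.coe_le_coe.2 hτt'))]
  calc (τ : ENNReal) + ENNReal.ofReal (g (γ (t₀ + τ)))
      ≤ τ + (ENNReal.ofReal (g (γ (t₀ + t))) + ENNReal.ofReal (t - τ : ℝ)) := by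
        gcongr
        exact (ENNReal.ofReal_le_ofReal hgτ).trans ENNReal.ofReal_add_le
    _ = t + ENNReal.ofReal (g (γ (t₀ + t))) := by
        rw [← NNReal.coe_sub hτt', ENNReal.ofReal_coe_nnreal, add_left_comm, ← ENNReal.coe_add,
          add_tsub_cancel_of_le hτt', add_comm]

end ExitTime

section Sublevel

variable {X : Type*} [MetricSpace X] {Γ : Set X} {g : X → ℝ}

lemma exitCost_le_iff {Lg C : NNReal} {t₀ : NNReal} {γ : C(NNReal, X)} {b : ENNReal}
    (hΓ : IsClosed Γ) (hg : LipschitzOnWith Lg g Γ) (hLgC : (Lg : ℝ) * C ≤ 1)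
    (hγ : LipschitzWith C γ) (hb : b ≠ ⊤) :
    exitCost Γ g t₀ γ ≤ b ↔
      ∃ t : NNReal, γ (t₀ + t) ∈ Γ ∧ (t : ENNReal) + ENNReal.ofReal (g (γ (t₀ + t))) ≤ b :=
  ⟨exists_mem_of_exitCost_le hΓ hb, fun ⟨_, ht, htb⟩ =>
    (exitCost_le_of_mem hΓ hg hLgC hγ ht).trans htb⟩

variable (Γ g) in
def exitCostSublevel (b : ENNReal) : Set ((NNReal × C(NNReal, X)) × NNReal) :=
  {z | z.1.2 (z.1.1 + z.2) ∈ Γ ∧ (z.2 : ENNReal) + ENNReal.ofReal (g (z.1.2 (z.1.1 + z.2))) ≤ b}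

lemma isClosed_exitCostSublevel (hΓ : IsClosed Γ) (hg : ContinuousOn g Γ) (b : ENNReal) :
    IsClosed (exitCostSublevel Γ g b) := by
  have hexit : Continuous fun z : (NNReal × C(NNReal, X)) × NNReal => z.1.2 (z.1.1 + z.2) :=
    by fun_prop
  refine ContinuousOn.preimage_isClosed_of_isClosed ?_ (hΓ.preimage hexit) isClosed_Iic
  exact (ENNReal.continuous_coe.comp continuous_snd).continuousOn.add
    (ENNReal.continuous_ofReal.comp_continuousOn (hg.comp hexit.continuousOn (mapsTo_preimage _ _)))

lemma isClosed_image_fst_exitCostSublevel (hΓ : IsClosed Γ) (hg : ContinuousOn g Γ) {b : ENNReal}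
    (hb : b ≠ ⊤) : IsClosed (Prod.fst '' exitCostSublevel Γ g b) :=
  (isClosed_exitCostSublevel hΓ hg b).image_fst_of_forall_snd_mem (isCompact_Icc (a := 0))
    fun _ hz => ⟨bot_le, ENNReal.le_toNNReal_of_coe_le (le_self_add.trans hz.2) hb⟩

end Sublevel

theorem stmt2_general {X : Type*} [MetricSpace X]
    (Γ : Set X) (hΓ : IsClosed Γ)
    (g : X → ℝ) (Lg : NNReal) (hg : LipschitzOnWith Lg g Γ)
    (C : NNReal) (hLgC : (Lg : ℝ) * (C : ℝ) < 1) :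
    LowerSemicontinuousOn (fun p : NNReal × C(NNReal, X) => exitCost Γ g p.1 p.2)
      {p : NNReal × C(NNReal, X) | LipschitzWith C p.2} := by
  refine lowerSemicontinuousOn_iff_preimage_Iic.2 fun b => ?_
  rcases eq_or_ne b ⊤ with rfl | hb
  · exact ⟨univ, isClosed_univ, by simp⟩
  refine ⟨_, isClosed_image_fst_exitCostSublevel hΓ hg.continuousOn hb, ?_⟩
  ext ⟨t₀, γ⟩
  simp only [mem_inter_iff, mem_preimage, mem_Iic, mem_ofPred_eq]
  refine and_congr_right fun hγ => (exitCost_le_iff hΓ hg hLgC.le hγ hb).trans ?_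
  simp [exitCostSublevel]

/-- The functional `J(t₀,γ) = τ(t₀,γ) + g(exit point)` is lower
semicontinuous on `ℝ≥0 × Lip_C(ℝ≥0, X)` whenever `g` is `L_g`-Lipschitz on the nonempty
closed set `Γ` and `L_g · C < 1`. -/
theorem stmt2 {X : Type*} [MetricSpace X] [CompleteSpace X]
    [TopologicalSpace.SeparableSpace X]
    (Γ : Set X) (hΓne : Γ.Nonempty) (hΓ : IsClosed Γ)
    (g : X → ℝ) (Lg : NNReal) (hg : LipschitzOnWith Lg g Γ)
    (hgnonneg : ∀ x ∈ Γ, 0 ≤ g x)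
    (C : NNReal) (hC : 0 < C) (hLgC : (Lg : ℝ) * (C : ℝ) < 1) :
    LowerSemicontinuousOn (fun p : NNReal × C(NNReal, X) => exitCost Γ g p.1 p.2)
      {p : NNReal × C(NNReal, X) | LipschitzWith C p.2} :=
  stmt2_general Γ hΓ g Lg hg C hLgC
end

section
/- Let X be a Polish space with metric d, p ∈ [1,∞), ψ : ℝ≥0 → ℝ≥0 nondecreasing, α > 0, t₀ ≥ 0, and Q a probability measure on C(ℝ≥0,X) concentrated on curves γ such that: lim_{s→∞}γ(s) exists, d(0,γ(s)) ≤ ψ(d(0,γ(0))) for all s ∈ [0,∞], and γ is constant on [t,∞) whenever d(0,γ(0)) ≤ α(t−t₀) and t ≥ t₀. Then with m_t = (e_t)_#Q, m_∞ = (e_∞)_#Q, and m₀ = (e_0)_#Q ∈ P_p(X), for all t ≥ t₀: W_p(m_t, m_∞)^p ≤ 2^p ∫_{X \ B̄(0, α(t−t₀))} ψ(d(0,x))^p dm₀(x), where W_p is the p-Wasserstein distance. -/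
open MeasureTheory Filter Topology Metric

/-- The `p`-th power of the `p`-Wasserstein distance, defined as the infimum over couplings of
`∫ d(x,y)^p dπ(x,y)`, valued in `[0,+∞]`. -/
noncomputable def wassersteinPow {X : Type*} [MetricSpace X] [MeasurableSpace X]
    (p : ℝ) (μ ν : Measure X) : ENNReal :=
  ⨅ (π : Measure (X × X)) (_ : π.map Prod.fst = μ) (_ : π.map Prod.snd = ν),
    ∫⁻ q, ENNReal.ofReal (dist q.1 q.2 ^ p) ∂π

/-- Quantitative convergence of `m_t` to `m_∞` in the `p`-Wasserstein
distance: `W_p(m_t, m_∞)^p ≤ 2^p ∫_{X \ B̄(0, α(t-t₀))} ψ(d(0,x))^p dm₀(x)` for `t ≥ t₀`. -/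
theorem stmt15 {X : Type*} [MetricSpace X] [PolishSpace X]
    [MeasurableSpace X] [BorelSpace X]
    [MeasurableSpace C(NNReal, X)] [BorelSpace C(NNReal, X)]
    (x₀ : X) (p : ℝ) (hp : 1 ≤ p)
    (ψ : ℝ → ℝ) (hψmono : Monotone ψ) (hψ0 : ∀ R : ℝ, 0 ≤ R → 0 ≤ ψ R)
    (α : ℝ) (hα : 0 < α) (t₀ : NNReal)
    (Q : Measure C(NNReal, X)) [IsProbabilityMeasure Q]
    (einf : C(NNReal, X) → X) (hmeas : AEMeasurable einf Q)
    (hae : ∀ᵐ γ ∂Q, Tendsto (fun s : NNReal => γ s) atTop (nhds (einf γ)) ∧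
      (∀ s : NNReal, dist x₀ (γ s) ≤ ψ (dist x₀ (γ 0))) ∧
      dist x₀ (einf γ) ≤ ψ (dist x₀ (γ 0)) ∧
      (∀ t : NNReal, t₀ ≤ t → dist x₀ (γ 0) ≤ α * ((t : ℝ) - (t₀ : ℝ)) →
        ∀ s : NNReal, t ≤ s → γ s = γ t))
    (hm₀ : ∫⁻ x, ENNReal.ofReal (dist x₀ x ^ p)
        ∂(Q.map (fun γ : C(NNReal, X) => γ 0)) < ⊤) :
    ∀ t : NNReal, t₀ ≤ t →
      wassersteinPow p (Q.map (fun γ : C(NNReal, X) => γ t)) (Q.map einf) ≤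
        ENNReal.ofReal (2 ^ p) *
          ∫⁻ x in (closedBall x₀ (α * ((t : ℝ) - (t₀ : ℝ))))ᶜ,
            ENNReal.ofReal (ψ (dist x₀ x) ^ p)
            ∂(Q.map (fun γ : C(NNReal, X) => γ 0)) := by
  intro t ht
  set r : ℝ := α * ((t : ℝ) - (t₀ : ℝ)) with hr
  have hp0 : (0 : ℝ) < p := lt_of_lt_of_le one_pos hp
  have het : Measurable (fun γ : C(NNReal, X) => γ t) :=
    (continuous_eval_const t).measurable
  have he0 : Measurable (fun γ : C(NNReal, X) => γ 0) :=
    (continuous_eval_const 0).measurable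
  have hpair : AEMeasurable (fun γ : C(NNReal, X) => (γ t, einf γ)) Q :=
    het.aemeasurable.prodMk hmeas
  set π : Measure (X × X) := Q.map (fun γ : C(NNReal, X) => (γ t, einf γ)) with hπ
  have h1 : π.map Prod.fst = Q.map (fun γ : C(NNReal, X) => γ t) := by
    rw [hπ, AEMeasurable.map_map_of_aemeasurable measurable_fst.aemeasurable hpair]
    rfl
  have h2 : π.map Prod.snd = Q.map einf := by
    rw [hπ, AEMeasurable.map_map_of_aemeasurable measurable_snd.aemeasurable hpair]
    rfl
  have hfmeas : Measurable (fun q : X × X => ENNReal.ofReal (dist q.1 q.2 ^ p)) :=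
    ENNReal.measurable_ofReal.comp (measurable_dist.pow measurable_const)
  have step1 : wassersteinPow p (Q.map (fun γ : C(NNReal, X) => γ t)) (Q.map einf) ≤
      ∫⁻ γ, ENNReal.ofReal (dist (γ t) (einf γ) ^ p) ∂Q := by
    refine le_trans (iInf_le_of_le π (iInf_le_of_le h1 (iInf_le_of_le h2 le_rfl))) ?_
    rw [hπ, lintegral_map' hfmeas.aemeasurable hpair]
  have hSmeas : MeasurableSet ((closedBall x₀ r)ᶜ) :=
    measurableSet_closedBall.compl
  set g : X → ENNReal := fun x =>
    ((closedBall x₀ r)ᶜ).indicator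
      (fun x => ENNReal.ofReal (2 ^ p) * ENNReal.ofReal (ψ (dist x₀ x) ^ p)) x with hg
  have hgmeas : Measurable g := by
    refine Measurable.indicator ?_ hSmeas
    have hψm : Measurable ψ := hψmono.measurable
    exact measurable_const.mul (ENNReal.measurable_ofReal.comp
      ((hψm.comp (measurable_dist.comp (measurable_const.prodMk measurable_id))).pow
        measurable_const))
  have step2 : ∫⁻ γ, ENNReal.ofReal (dist (γ t) (einf γ) ^ p) ∂Q ≤
      ∫⁻ γ, g (γ 0) ∂Q := by
    refine lintegral_mono_ae ?_
    filter_upwards [hae] with γ hγ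
    obtain ⟨hlim, hbd, hbdinf, hconst⟩ := hγ
    by_cases hd : dist x₀ (γ 0) ≤ r
    · have heq : einf γ = γ t := by
        have hconst' : ∀ s : NNReal, t ≤ s → γ s = γ t := hconst t ht hd
        have htend : Tendsto (fun s : NNReal => γ s) atTop (nhds (γ t)) := by
          refine Tendsto.congr' ?_ tendsto_const_nhds
          filter_upwards [eventually_ge_atTop t] with s hs using (hconst' s hs).symm
        exact tendsto_nhds_unique hlim htend
      have : dist (γ t) (einf γ) = 0 := by rw [heq, dist_self]
      rw [this, Real.zero_rpow (ne_of_gt hp0), ENNReal.ofReal_zero]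
      exact zero_le
    · have hmem : γ 0 ∈ (closedBall x₀ r)ᶜ := by
        simp only [Set.mem_compl_iff, mem_closedBall, dist_comm (γ 0) x₀]
        exact hd
      simp only [hg, Set.indicator_of_mem hmem]
      have hψnn : 0 ≤ ψ (dist x₀ (γ 0)) := hψ0 _ dist_nonneg
      have hdb : dist (γ t) (einf γ) ≤ 2 * ψ (dist x₀ (γ 0)) := by
        calc dist (γ t) (einf γ) ≤ dist (γ t) x₀ + dist x₀ (einf γ) := dist_triangle _ _ _
          _ ≤ ψ (dist x₀ (γ 0)) + ψ (dist x₀ (γ 0)) := by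
              rw [dist_comm (γ t) x₀]; exact add_le_add (hbd t) hbdinf
          _ = 2 * ψ (dist x₀ (γ 0)) := by ring
      have hrp : dist (γ t) (einf γ) ^ p ≤ 2 ^ p * ψ (dist x₀ (γ 0)) ^ p := by
        calc dist (γ t) (einf γ) ^ p ≤ (2 * ψ (dist x₀ (γ 0))) ^ p :=
              Real.rpow_le_rpow dist_nonneg hdb (le_of_lt hp0)
          _ = 2 ^ p * ψ (dist x₀ (γ 0)) ^ p :=
              Real.mul_rpow (by norm_num) hψnn
      calc ENNReal.ofReal (dist (γ t) (einf γ) ^ p)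
          ≤ ENNReal.ofReal (2 ^ p * ψ (dist x₀ (γ 0)) ^ p) := ENNReal.ofReal_le_ofReal hrp
        _ = ENNReal.ofReal (2 ^ p) * ENNReal.ofReal (ψ (dist x₀ (γ 0)) ^ p) :=
              ENNReal.ofReal_mul (Real.rpow_nonneg (by norm_num) p)
  have step3 : ∫⁻ γ, g (γ 0) ∂Q = ∫⁻ x, g x ∂(Q.map (fun γ : C(NNReal, X) => γ 0)) :=
    (lintegral_map hgmeas he0).symm
  have step4 : ∫⁻ x, g x ∂(Q.map (fun γ : C(NNReal, X) => γ 0)) =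
      ENNReal.ofReal (2 ^ p) *
        ∫⁻ x in (closedBall x₀ r)ᶜ, ENNReal.ofReal (ψ (dist x₀ x) ^ p)
          ∂(Q.map (fun γ : C(NNReal, X) => γ 0)) := by
    rw [hg, lintegral_indicator hSmeas, lintegral_const_mul' _ _ ENNReal.ofReal_ne_top]
  calc wassersteinPow p (Q.map (fun γ : C(NNReal, X) => γ t)) (Q.map einf)
      ≤ ∫⁻ γ, ENNReal.ofReal (dist (γ t) (einf γ) ^ p) ∂Q := step1
    _ ≤ ∫⁻ γ, g (γ 0) ∂Q := step2
    _ = _ := by rw [step3, step4]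
end
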